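/- arXiv:1301.0411 — 3 statements merged into one kernel-verified Lean document; each statement's English description precedes it below -/
import Mathlib

section
/- Let V be a finite-dimensional complex inner product space with isometric real structure A, and let W = cos(t)X + sin(t)(iY) with X, Y ∈ V(A) orthonormal and t ∈ [0, π/4]. Then W ∈ V(λA) for some unit complex number λ (i.e. W is fixed by some real structure in the circle family {λA : |λ|=1}) if and only if t = 0. -/
/-!
Fixed vectors of an isometric real structure `A` have real inner products (apply the isometry
to `x` and `i • y`), so `X, Y` is a complex orthonormal pair and `A` acts on `a • X + b • Y` by
conjugating the coordinates. Hence `λ • A W = W` for `W = cos t • X + (i sin t) • Y` means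
`λ cos t = cos t` and `-λ i sin t = i sin t`; as `cos t ≠ 0` on `[0, π/4]`, the first forces
`λ = 1`, and then the second forces `sin t = 0`, i.e. `t = 0`.
-/

open ComplexConjugate

lemma smul_apply_eq_self_iff_of_linearIndependent {V : Type*} [AddCommGroup V] [Module ℂ V]
    (A : V →ₗ⋆[ℂ] V) {x y : V} (hx : A x = x) (hy : A y = y)
    (hxy : LinearIndependent ℂ ![x, y]) (lam a b : ℂ) :
    lam • A (a • x + b • y) = a • x + b • y ↔ lam * conj a = a ∧ lam * conj b = b := by
  rw [map_add, map_smulₛₗ, map_smulₛₗ, hx, hy, smul_add, smul_smul, smul_smul]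
  exact ⟨hxy.eq_of_pair, fun ⟨ha, hb⟩ => by rw [ha, hb]⟩

section InnerProduct

variable {V : Type*} [NormedAddCommGroup V] [InnerProductSpace ℂ V]

lemma inner_im_eq_zero_of_apply_eq_self (A : V →ₗ⋆[ℂ] V)
    (hiso : ∀ v w, (inner ℂ (A v) (A w)).re = (inner ℂ v w).re)
    {x y : V} (hx : A x = x) (hy : A y = y) : (inner ℂ x y).im = 0 := by
  have h := hiso x (Complex.I • y)
  rw [map_smulₛₗ, hx, hy, Complex.conj_I, inner_smul_right, inner_smul_right] at h
  simp only [Complex.mul_re, Complex.neg_re, Complex.I_re, Complex.neg_im, Complex.I_im] at h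
  linarith

lemma norm_eq_one_of_re_inner_self_eq_one {x : V} (hx : (inner ℂ x x).re = 1) : ‖x‖ = 1 := by
  rw [← RCLike.re_to_complex, inner_self_eq_norm_sq] at hx
  exact (pow_eq_one_iff_of_nonneg (norm_nonneg x) two_ne_zero).mp hx

lemma orthonormal_pair_of_apply_eq_self (A : V →ₗ⋆[ℂ] V)
    (hiso : ∀ v w, (inner ℂ (A v) (A w)).re = (inner ℂ v w).re)
    {x y : V} (hx : A x = x) (hy : A y = y) (hxx : (inner ℂ x x).re = 1)
    (hyy : (inner ℂ y y).re = 1) (hxy : (inner ℂ x y).re = 0) :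
    Orthonormal ℂ ![x, y] := by
  have hxy' : inner ℂ x y = 0 :=
    Complex.ext hxy (inner_im_eq_zero_of_apply_eq_self A hiso hx hy)
  simpa [hxy'] using
    And.intro (norm_eq_one_of_re_inner_self_eq_one hxx) (norm_eq_one_of_re_inner_self_eq_one hyy)

end InnerProduct

theorem stmt_3_general {V : Type*} [NormedAddCommGroup V] [InnerProductSpace ℂ V]
    (A : V → V)
    (hadd : ∀ v w, A (v + w) = A v + A w)
    (hconj : ∀ (lam : ℂ) (v : V), A (lam • v) = (starRingEnd ℂ lam) • A v)
    (hiso : ∀ v w, (inner ℂ (A v) (A w) : ℂ).re = (inner ℂ v w : ℂ).re)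
    (X Y : V) (hX : A X = X) (hY : A Y = Y)
    (hXX : (inner ℂ X X : ℂ).re = 1) (hYY : (inner ℂ Y Y : ℂ).re = 1)
    (hXY : (inner ℂ X Y : ℂ).re = 0)
    (t : ℝ) (ht : t ∈ Set.Icc 0 (Real.pi / 4))
    (W : V) (hW : W = (Real.cos t : ℂ) • X + (Real.sin t : ℂ) • (Complex.I • Y)) :
    (∃ lam : ℂ, ‖lam‖ = 1 ∧ lam • A W = W) ↔ t = 0 := by
  let A' : V →ₗ⋆[ℂ] V := { toFun := A, map_add' := hadd, map_smul' := hconj }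
  have hXY_indep : LinearIndependent ℂ ![X, Y] :=
    (orthonormal_pair_of_apply_eq_self A' hiso hX hY hXX hYY hXY).linearIndependent
  obtain ⟨ht0, ht1⟩ := ht
  have hpi := Real.pi_pos
  have hcos : (Real.cos t : ℂ) ≠ 0 := by
    exact_mod_cast (Real.cos_pos_of_mem_Ioo ⟨by linarith, by linarith⟩).ne'
  have hsin : Real.sin t = 0 ↔ t = 0 :=
    Real.sin_eq_zero_iff_of_lt_of_lt (by linarith) (by linarith)
  rw [hW, smul_smul]
  change (∃ lam : ℂ, ‖lam‖ = 1 ∧ lam • A' _ = _) ↔ _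
  simp only [smul_apply_eq_self_iff_of_linearIndependent A' hX hY hXY_indep, map_mul,
    Complex.conj_ofReal, Complex.conj_I]
  constructor
  · rintro ⟨lam, -, hlam, hlam_sin⟩
    rw [mul_left_eq_self₀, or_iff_left hcos] at hlam
    rw [hlam, one_mul, mul_neg, neg_eq_self, mul_eq_zero, or_iff_left Complex.I_ne_zero,
      Complex.ofReal_eq_zero] at hlam_sin
    exact hsin.mp hlam_sin
  · rintro rfl
    exact ⟨1, by simp, by simp⟩

theorem stmt_3 {V : Type*} [NormedAddCommGroup V] [InnerProductSpace ℂ V]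
    [FiniteDimensional ℂ V] (A : V → V)
    (hadd : ∀ v w, A (v + w) = A v + A w)
    (hconj : ∀ (lam : ℂ) (v : V), A (lam • v) = (starRingEnd ℂ lam) • A v)
    (hinv : ∀ v, A (A v) = v)
    (hiso : ∀ v w, (inner ℂ (A v) (A w) : ℂ).re = (inner ℂ v w : ℂ).re)
    (X Y : V) (hX : A X = X) (hY : A Y = Y)
    (hXX : (inner ℂ X X : ℂ).re = 1) (hYY : (inner ℂ Y Y : ℂ).re = 1)
    (hXY : (inner ℂ X Y : ℂ).re = 0)
    (t : ℝ) (ht : t ∈ Set.Icc 0 (Real.pi / 4))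
    (W : V) (hW : W = (Real.cos t : ℂ) • X + (Real.sin t : ℂ) • (Complex.I • Y)) :
    (∃ lam : ℂ, ‖lam‖ = 1 ∧ lam • A W = W) ↔ t = 0 :=
  stmt_3_general A hadd hconj hiso X Y hX hY hXX hYY hXY t ht W hW
end

section
/- Define R(X,Y)Z = g(Y,Z)X − g(X,Z)Y + g(JY,Z)JX − g(JX,Z)JY − 2g(JX,Y)JZ + g(AY,Z)AX − g(AX,Z)AY + g(JAY,Z)JAX − g(JAX,Z)JAY on a real inner product space (V,g) equipped with an orthogonal complex structure J and an isometric real structure A anticommuting with J. Then R satisfies the symmetries of an algebraic curvature tensor: R(X,Y)Z = −R(Y,X)Z, g(R(X,Y)Z,W) = −g(R(X,Y)W,Z), the first Bianchi identity R(X,Y)Z + R(Y,Z)X + R(Z,X)Y = 0, and g(R(X,Y)Z,W) = g(R(Z,W)X,Y). -/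
open scoped RealInnerProductSpace

theorem stmt_4 {V : Type*} [NormedAddCommGroup V] [InnerProductSpace ℝ V]
    (J A : V →ₗ[ℝ] V)
    (hJiso : ∀ x y, ⟪J x, J y⟫ = ⟪x, y⟫) (hJ2 : ∀ x, J (J x) = -x)
    (hAiso : ∀ x y, ⟪A x, A y⟫ = ⟪x, y⟫) (hA2 : ∀ x, A (A x) = x)
    (hAJ : ∀ x, A (J x) = - J (A x))
    (R : V → V → V → V)
    (hR : ∀ X Y Z, R X Y Z =
      ⟪Y, Z⟫ • X - ⟪X, Z⟫ • Y + ⟪J Y, Z⟫ • J X - ⟪J X, Z⟫ • J Y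
        - (2 : ℝ) • (⟪J X, Y⟫ • J Z)
        + ⟪A Y, Z⟫ • A X - ⟪A X, Z⟫ • A Y
        + ⟪J (A Y), Z⟫ • J (A X) - ⟪J (A X), Z⟫ • J (A Y)) :
    (∀ X Y Z, R X Y Z = - R Y X Z) ∧
    (∀ X Y Z W, ⟪R X Y Z, W⟫ = - ⟪R X Y W, Z⟫) ∧
    (∀ X Y Z, R X Y Z + R Y Z X + R Z X Y = 0) ∧
    (∀ X Y Z W, ⟪R X Y Z, W⟫ = ⟪R Z W X, Y⟫) := by
  -- skewness of ⟪J ·, ·⟫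
  have hJskew : ∀ x y : V, ⟪J x, y⟫ = -⟪J y, x⟫ := by
    intro x y
    have h1 : ⟪J x, J (J y)⟫ = ⟪x, J y⟫ := hJiso x (J y)
    rw [hJ2 y, inner_neg_right] at h1
    have := real_inner_comm x (J y)
    linarith
  -- symmetry of ⟪A ·, ·⟫
  have hAsym : ∀ x y : V, ⟪A x, y⟫ = ⟪A y, x⟫ := by
    intro x y
    have h1 : ⟪A x, A (A y)⟫ = ⟪x, A y⟫ := hAiso x (A y)
    rw [hA2 y] at h1
    rw [h1, real_inner_comm]
  -- symmetry of ⟪J (A ·), ·⟫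
  have hDsym : ∀ x y : V, ⟪J (A x), y⟫ = ⟪J (A y), x⟫ := by
    intro x y
    have key : J (A (J (A y))) = y := by
      rw [hAJ (A y), hA2, map_neg, hJ2, neg_neg]
    have h1 : ⟪J (A x), J (A (J (A y)))⟫ = ⟪A x, A (J (A y))⟫ := hJiso _ _
    rw [key, hAiso] at h1
    rw [h1, real_inner_comm]
  -- expansion of ⟪R X Y Z, W⟫
  have hS : ∀ X Y Z W : V, ⟪R X Y Z, W⟫ =
      ⟪Y, Z⟫ * ⟪X, W⟫ - ⟪X, Z⟫ * ⟪Y, W⟫ + ⟪J Y, Z⟫ * ⟪J X, W⟫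
        - ⟪J X, Z⟫ * ⟪J Y, W⟫ - 2 * (⟪J X, Y⟫ * ⟪J Z, W⟫)
        + ⟪A Y, Z⟫ * ⟪A X, W⟫ - ⟪A X, Z⟫ * ⟪A Y, W⟫
        + ⟪J (A Y), Z⟫ * ⟪J (A X), W⟫ - ⟪J (A X), Z⟫ * ⟪J (A Y), W⟫ := by
    intro X Y Z W
    rw [hR]
    simp [inner_add_left, inner_sub_left, real_inner_smul_left]
    try ring
  refine ⟨?_, ?_, ?_, ?_⟩
  · intro X Y Z
    apply ext_inner_right ℝ
    intro w
    rw [inner_neg_left, hS, hS]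
    linear_combination (-2 * ⟪J Z, w⟫) * hJskew X Y
  · intro X Y Z W
    rw [hS, hS]
    linear_combination (-2 * ⟪J X, Y⟫) * hJskew Z W
  · intro X Y Z
    apply ext_inner_right ℝ
    intro w
    rw [inner_add_left, inner_add_left, inner_zero_left, hS, hS, hS]
    linear_combination - ⟪X, w⟫ * real_inner_comm Y Z - ⟪Y, w⟫ * real_inner_comm Z X
      - ⟪Z, w⟫ * real_inner_comm X Y
      - ⟪J X, w⟫ * hJskew Y Z - ⟪J Y, w⟫ * hJskew Z X - ⟪J Z, w⟫ * hJskew X Y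
      + ⟪A X, w⟫ * hAsym Y Z + ⟪A Y, w⟫ * hAsym Z X + ⟪A Z, w⟫ * hAsym X Y
      + ⟪J (A X), w⟫ * hDsym Y Z + ⟪J (A Y), w⟫ * hDsym Z X
      + ⟪J (A Z), w⟫ * hDsym X Y
  · intro X Y Z W
    rw [hS, hS]
    linear_combination - ⟪X, W⟫ * real_inner_comm Y Z - ⟪Z, Y⟫ * real_inner_comm X W
      + ⟪Y, W⟫ * real_inner_comm X Z + ⟪Z, X⟫ * real_inner_comm Y W
      + ⟪J X, W⟫ * hJskew Y Z - ⟪J Z, Y⟫ * hJskew X W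
      - ⟪J Y, W⟫ * hJskew X Z + ⟪J Z, X⟫ * hJskew Y W
      + ⟪A X, W⟫ * hAsym Y Z + ⟪A Z, Y⟫ * hAsym X W
      - ⟪A Y, W⟫ * hAsym X Z - ⟪A Z, X⟫ * hAsym Y W
      + ⟪J (A X), W⟫ * hDsym Y Z + ⟪J (A Z), Y⟫ * hDsym X W
      - ⟪J (A Y), W⟫ * hDsym X Z - ⟪J (A Z), X⟫ * hDsym Y W
end

section
/- Let (V,g) be a real inner product space with orthogonal complex structure J and isometric real structure A with A² = id and AJ = −JA, and let R be the curvature tensor of the complex quadric, R(X,Y)Z = g(Y,Z)X − g(X,Z)Y + g(JY,Z)JX − g(JX,Z)JY − 2g(JX,Y)JZ + g(AY,Z)AX − g(AX,Z)AY + g(JAY,Z)JAX − g(JAX,Z)JAY. Suppose N is a unit vector such that N, JN, AN, JAN are pairwise orthonormal (N is 𝔄-isotropic). Then the normal Jacobi operator R_N : Z ↦ R(Z,N)N satisfies R_N Z = Z − g(Z,N)N + 3g(Z,JN)JN − g(Z,AN)AN − g(Z,JAN)JAN; in particular R_N is self-adjoint with eigenvalues 0, 1, 4, where the 0-eigenspace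 is span{N, AN, JAN}, the 4-eigenspace is span{JN}, and the 1-eigenspace is the orthogonal complement of span{N, JN, AN, JAN}. -/
open scoped RealInnerProductSpace

/-!
Since `J` is skew-adjoint, `A` is self-adjoint and `AJ = -JA`, every coefficient of `R(Z,N)N` is
one of `g(Z,N)`, `g(Z,JN)`, `g(Z,AN)`, `g(Z,JAN)`, and isotropy of `N` kills the terms
`g(AN,N) AZ` and `g(JAN,N) JAZ`. What remains is `Z` minus the orthogonal projections onto
`N`, `AN`, `JAN` plus three times the projection onto `JN`, for the orthonormal frame
`N, JN, AN, JAN`; self-adjointness and the eigenspaces of such an operator are read off the frame.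
-/

section CompatibleStructures

variable {V : Type*} [NormedAddCommGroup V] [InnerProductSpace ℝ V]

theorem inner_map_left_eq_neg_of_comp_self_eq_neg {J : V → V}
    (hJiso : ∀ x y, ⟪J x, J y⟫ = ⟪x, y⟫) (hJ2 : ∀ x, J (J x) = -x) (x y : V) :
    ⟪J x, y⟫ = -⟪x, J y⟫ := by
  rw [← hJiso x (J y), hJ2, inner_neg_right, neg_neg]

theorem inner_self_map_eq_zero_of_comp_self_eq_neg {J : V → V}
    (hJiso : ∀ x y, ⟪J x, J y⟫ = ⟪x, y⟫) (hJ2 : ∀ x, J (J x) = -x) (x : V) :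
    ⟪x, J x⟫ = 0 := by
  have h := inner_map_left_eq_neg_of_comp_self_eq_neg hJiso hJ2 x x
  rw [real_inner_comm] at h
  linarith

theorem norm_map_eq_of_inner_map_map {J : V → V} (hJiso : ∀ x y, ⟪J x, J y⟫ = ⟪x, y⟫) (x : V) :
    ‖J x‖ = ‖x‖ := by
  simpa using hJiso x x

theorem inner_map_left_eq_of_comp_self_eq_self {A : V → V}
    (hAiso : ∀ x y, ⟪A x, A y⟫ = ⟪x, y⟫) (hA2 : ∀ x, A (A x) = x) (x y : V) :
    ⟪A x, y⟫ = ⟪x, A y⟫ := by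
  rw [← hAiso x (A y), hA2]

end CompatibleStructures

section NormalJacobiModel

variable {V : Type*} [NormedAddCommGroup V] [InnerProductSpace ℝ V]

def normalJacobiModel (e : Fin 4 → V) : V →ₗ[ℝ] V where
  toFun Z := Z - ⟪Z, e 0⟫ • e 0 + (3 : ℝ) • (⟪Z, e 1⟫ • e 1)
    - ⟪Z, e 2⟫ • e 2 - ⟪Z, e 3⟫ • e 3
  map_add' x y := by
    simp only [inner_add_left]
    module
  map_smul' a x := by
    simp only [real_inner_smul_left, RingHom.id_apply]
    module

variable (e : Fin 4 → V)

theorem normalJacobiModel_apply (Z : V) :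
    normalJacobiModel e Z = Z - ⟪Z, e 0⟫ • e 0 + (3 : ℝ) • (⟪Z, e 1⟫ • e 1)
      - ⟪Z, e 2⟫ • e 2 - ⟪Z, e 3⟫ • e 3 := rfl

theorem inner_normalJacobiModel_left (Z W : V) :
    ⟪normalJacobiModel e Z, W⟫ = ⟪Z, normalJacobiModel e W⟫ := by
  simp only [normalJacobiModel_apply, inner_sub_right, inner_add_right, real_inner_smul_right,
    real_inner_comm W]
  ring

variable {e}

theorem normalJacobiModel_apply_frame (he : Orthonormal ℝ e) (i : Fin 4) :
    normalJacobiModel e (e i) = (![0, 4, 0, 0] : Fin 4 → ℝ) i • e i := by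
  have hij := orthonormal_iff_ite.mp he
  fin_cases i <;> simp [normalJacobiModel_apply, hij, he.1]
  module

theorem inner_normalJacobiModel_frame (he : Orthonormal ℝ e) (Z : V) (i : Fin 4) :
    ⟪normalJacobiModel e Z, e i⟫ = (![0, 4, 0, 0] : Fin 4 → ℝ) i * ⟪Z, e i⟫ := by
  rw [inner_normalJacobiModel_left, normalJacobiModel_apply_frame he, real_inner_smul_right]

theorem normalJacobiModel_eq_zero_iff (he : Orthonormal ℝ e) (Z : V) :
    normalJacobiModel e Z = 0 ↔ Z ∈ Submodule.span ℝ {e 0, e 2, e 3} := by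
  constructor
  · intro hZ
    have h₁ : ⟪Z, e 1⟫ = 0 := by
      simpa [hZ] using inner_normalJacobiModel_frame he Z 1
    have hZ' : Z = ⟪Z, e 0⟫ • e 0 + ⟪Z, e 2⟫ • e 2 + ⟪Z, e 3⟫ • e 3 := by
      rw [normalJacobiModel_apply, h₁] at hZ
      linear_combination (norm := module) hZ
    rw [hZ']
    refine Submodule.add_mem _ (Submodule.add_mem _ ?_ ?_) ?_ <;>
      exact Submodule.smul_mem _ _ (Submodule.subset_span (by simp))
  · intro hZ
    suffices Submodule.span ℝ {e 0, e 2, e 3} ≤ LinearMap.ker (normalJacobiModel e) from this hZ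
    rw [Submodule.span_le]
    simp [Set.insert_subset_iff, normalJacobiModel_apply_frame he]

theorem normalJacobiModel_eq_four_smul_iff (he : Orthonormal ℝ e) (Z : V) :
    normalJacobiModel e Z = (4 : ℝ) • Z ↔ Z ∈ Submodule.span ℝ {e 1} := by
  constructor
  · intro hZ
    have hperp : ∀ i, i ≠ 1 → ⟪Z, e i⟫ = 0 := by
      intro i hi
      have h := inner_normalJacobiModel_frame he Z i
      rw [hZ, real_inner_smul_left] at h
      fin_cases i <;> simp_all
    rw [normalJacobiModel_apply, hperp 0 (by decide), hperp 2 (by decide),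
      hperp 3 (by decide)] at hZ
    refine Submodule.mem_span_singleton.mpr ⟨⟪Z, e 1⟫, ?_⟩
    linear_combination (norm := module) ((1 : ℝ) / 3) • hZ
  · intro hZ
    obtain ⟨a, rfl⟩ := Submodule.mem_span_singleton.mp hZ
    simp [normalJacobiModel_apply_frame he, smul_comm a]

end NormalJacobiModel

section ComplexQuadric

variable {V : Type*} [NormedAddCommGroup V] [InnerProductSpace ℝ V]

theorem orthonormal_isotropic_frame {J A : V → V}
    (hJiso : ∀ x y, ⟪J x, J y⟫ = ⟪x, y⟫) (hJ2 : ∀ x, J (J x) = -x)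
    (hAiso : ∀ x y, ⟪A x, A y⟫ = ⟪x, y⟫)
    {N : V} (hN : ‖N‖ = 1) (hAN : ⟪N, A N⟫ = 0) (hJAN : ⟪N, J (A N)⟫ = 0) :
    Orthonormal ℝ ![N, J N, A N, J (A N)] := by
  have hJ := inner_map_left_eq_neg_of_comp_self_eq_neg hJiso hJ2
  have hJself := inner_self_map_eq_zero_of_comp_self_eq_neg hJiso hJ2
  have hJnorm := norm_map_eq_of_inner_map_map hJiso
  have hAnorm := norm_map_eq_of_inner_map_map hAiso
  have hJNAN : ⟪J N, A N⟫ = 0 := by rw [hJ, hJAN, neg_zero]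
  refine orthonormal_iff_ite.mpr fun i j => ?_
  fin_cases i <;> fin_cases j <;>
    simp [hJnorm, hAnorm, hN, hJiso, hAN, hJAN, hJNAN, hJself, real_inner_comm N,
      real_inner_comm (J N), real_inner_comm (A N)]

theorem curvature_apply_isotropic_isotropic {J A : V → V}
    (hJiso : ∀ x y, ⟪J x, J y⟫ = ⟪x, y⟫) (hJ2 : ∀ x, J (J x) = -x)
    (hAiso : ∀ x y, ⟪A x, A y⟫ = ⟪x, y⟫) (hA2 : ∀ x, A (A x) = x)
    (hAJ : ∀ x, A (J x) = - J (A x))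
    {R : V → V → V → V}
    (hR : ∀ X Y Z, R X Y Z =
      ⟪Y, Z⟫ • X - ⟪X, Z⟫ • Y + ⟪J Y, Z⟫ • J X - ⟪J X, Z⟫ • J Y
        - (2 : ℝ) • (⟪J X, Y⟫ • J Z)
        + ⟪A Y, Z⟫ • A X - ⟪A X, Z⟫ • A Y
        + ⟪J (A Y), Z⟫ • J (A X) - ⟪J (A X), Z⟫ • J (A Y))
    {N : V} (hN : ‖N‖ = 1) (hAN : ⟪N, A N⟫ = 0) (hJAN : ⟪N, J (A N)⟫ = 0) (Z : V) :
    R Z N N = Z - ⟪Z, N⟫ • N + (3 : ℝ) • (⟪Z, J N⟫ • J N)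
      - ⟪Z, A N⟫ • A N - ⟪Z, J (A N)⟫ • J (A N) := by
  have hJ := inner_map_left_eq_neg_of_comp_self_eq_neg hJiso hJ2
  have hA := inner_map_left_eq_of_comp_self_eq_self hAiso hA2
  have hNN : ⟪N, N⟫ = 1 := by rw [real_inner_self_eq_norm_sq, hN, one_pow]
  have hJNN : ⟪J N, N⟫ = 0 := by
    rw [real_inner_comm]; exact inner_self_map_eq_zero_of_comp_self_eq_neg hJiso hJ2 N
  have hJAZN : ⟪J (A Z), N⟫ = ⟪Z, J (A N)⟫ := by
    rw [hJ, hA, hAJ, inner_neg_right, neg_neg]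
  rw [hR, hNN, hJNN, real_inner_comm N (A N), hAN, real_inner_comm N (J (A N)), hJAN, hJ Z, hA Z,
    hJAZN]
  module

end ComplexQuadric

theorem stmt_5_general {V : Type*} [NormedAddCommGroup V] [InnerProductSpace ℝ V]
    (J A : V →ₗ[ℝ] V)
    (hJiso : ∀ x y, ⟪J x, J y⟫ = ⟪x, y⟫) (hJ2 : ∀ x, J (J x) = -x)
    (hAiso : ∀ x y, ⟪A x, A y⟫ = ⟪x, y⟫) (hA2 : ∀ x, A (A x) = x)
    (hAJ : ∀ x, A (J x) = - J (A x))
    (R : V → V → V → V)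
    (hR : ∀ X Y Z, R X Y Z =
      ⟪Y, Z⟫ • X - ⟪X, Z⟫ • Y + ⟪J Y, Z⟫ • J X - ⟪J X, Z⟫ • J Y
        - (2 : ℝ) • (⟪J X, Y⟫ • J Z)
        + ⟪A Y, Z⟫ • A X - ⟪A X, Z⟫ • A Y
        + ⟪J (A Y), Z⟫ • J (A X) - ⟪J (A X), Z⟫ • J (A Y))
    (N : V) (hN : ‖N‖ = 1)
    (h2 : ⟪N, A N⟫ = 0) (h3 : ⟪N, J (A N)⟫ = 0) :
    (∀ Z, R Z N N = Z - ⟪Z, N⟫ • N + (3 : ℝ) • (⟪Z, J N⟫ • J N)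
        - ⟪Z, A N⟫ • A N - ⟪Z, J (A N)⟫ • J (A N)) ∧
    (∀ Z W, ⟪R Z N N, W⟫ = ⟪Z, R W N N⟫) ∧
    (∀ Z, R Z N N = 0 ↔ Z ∈ Submodule.span ℝ ({N, A N, J (A N)} : Set V)) ∧
    (∀ Z, R Z N N = (4 : ℝ) • Z ↔ Z ∈ Submodule.span ℝ ({J N} : Set V)) ∧
    (∀ Z, ⟪Z, N⟫ = 0 → ⟪Z, J N⟫ = 0 → ⟪Z, A N⟫ = 0 → ⟪Z, J (A N)⟫ = 0 →
      R Z N N = Z) := by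
  have he := orthonormal_isotropic_frame hJiso hJ2 hAiso hN h2 h3
  have hRN : ∀ Z, R Z N N = normalJacobiModel ![N, J N, A N, J (A N)] Z :=
    curvature_apply_isotropic_isotropic hJiso hJ2 hAiso hA2 hAJ hR hN h2 h3
  simp only [hRN]
  refine ⟨fun Z => rfl, inner_normalJacobiModel_left _, normalJacobiModel_eq_zero_iff he,
    normalJacobiModel_eq_four_smul_iff he, fun Z h₀ h₁ h₂ h₃ => ?_⟩
  simp [normalJacobiModel_apply, h₀, h₁, h₂, h₃]

theorem stmt_5 {V : Type*} [NormedAddCommGroup V] [InnerProductSpace ℝ V]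
    (J A : V →ₗ[ℝ] V)
    (hJiso : ∀ x y, ⟪J x, J y⟫ = ⟪x, y⟫) (hJ2 : ∀ x, J (J x) = -x)
    (hAiso : ∀ x y, ⟪A x, A y⟫ = ⟪x, y⟫) (hA2 : ∀ x, A (A x) = x)
    (hAJ : ∀ x, A (J x) = - J (A x))
    (R : V → V → V → V)
    (hR : ∀ X Y Z, R X Y Z =
      ⟪Y, Z⟫ • X - ⟪X, Z⟫ • Y + ⟪J Y, Z⟫ • J X - ⟪J X, Z⟫ • J Y
        - (2 : ℝ) • (⟪J X, Y⟫ • J Z)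
        + ⟪A Y, Z⟫ • A X - ⟪A X, Z⟫ • A Y
        + ⟪J (A Y), Z⟫ • J (A X) - ⟪J (A X), Z⟫ • J (A Y))
    (N : V) (hN : ‖N‖ = 1)
    (h1 : ⟪N, J N⟫ = 0) (h2 : ⟪N, A N⟫ = 0) (h3 : ⟪N, J (A N)⟫ = 0)
    (h4 : ⟪J N, A N⟫ = 0) (h5 : ⟪J N, J (A N)⟫ = 0) (h6 : ⟪A N, J (A N)⟫ = 0)
    (h7 : ‖J N‖ = 1) (h8 : ‖A N‖ = 1) (h9 : ‖J (A N)‖ = 1) :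
    (∀ Z, R Z N N = Z - ⟪Z, N⟫ • N + (3 : ℝ) • (⟪Z, J N⟫ • J N)
        - ⟪Z, A N⟫ • A N - ⟪Z, J (A N)⟫ • J (A N)) ∧
    (∀ Z W, ⟪R Z N N, W⟫ = ⟪Z, R W N N⟫) ∧
    (∀ Z, R Z N N = 0 ↔ Z ∈ Submodule.span ℝ ({N, A N, J (A N)} : Set V)) ∧
    (∀ Z, R Z N N = (4 : ℝ) • Z ↔ Z ∈ Submodule.span ℝ ({J N} : Set V)) ∧
    (∀ Z, ⟪Z, N⟫ = 0 → ⟪Z, J N⟫ = 0 → ⟪Z, A N⟫ = 0 → ⟪Z, J (A N)⟫ = 0 →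
      R Z N N = Z) :=
  stmt_5_general J A hJiso hJ2 hAiso hA2 hAJ R hR N hN h2 h3
end
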